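/- arXiv:1611.00976 — 4 statements merged into one kernel-verified Lean document; each statement's English description precedes it below -/
import Mathlib

section
/- Let G be a finite group whose order is invertible in a commutative ring A, with G acting on A by ring automorphisms, and let B = A^G. Let G act on A ⊗_B N through the first factor. Then for every B-module N, the natural map N → (A ⊗_B N)^G induced by n ↦ 1 ⊗ n is an isomorphism. -/
open TensorProduct

/-- The subring of invariants `A^G`. -/
def fixedSubring (G A : Type*) [Group G] [CommRing A] [MulSemiringAction G A] :
    Subring A where
  carrier := {a | ∀ g : G, g • a = a}
  zero_mem' := fun g => smul_zero g
  one_mem' := fun g => smul_one g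
  add_mem' := fun {a b} ha hb g => by rw [smul_add, ha g, hb g]
  mul_mem' := fun {a b} ha hb g => by rw [smul_mul', ha g, hb g]
  neg_mem' := fun {a} ha g => by rw [smul_neg, ha g]

/-- The action of `g : G` on `A`, viewed as a linear map over the invariants `B = A^G`. -/
def actionLinear {G A : Type*} [Group G] [CommRing A] [MulSemiringAction G A] (g : G) :
    A →ₗ[fixedSubring G A] A where
  toFun a := g • a
  map_add' a b := smul_add g a b
  map_smul' b a := by
    show g • ((b : A) * a) = (b : A) * (g • a)
    rw [smul_mul', b.2 g]

/-- **Projection formula for invariants.** With `B = A^G` and `|G|` invertible, for every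
`B`-module `N` the natural map `N → (A ⊗_B N)^G`, `n ↦ 1 ⊗ n`, is an isomorphism:
it is injective with image exactly the `G`-invariants of `A ⊗_B N`, where `G` acts
through the first factor. -/
theorem natural_map_to_invariants_of_baseChange_bijective
    {G A : Type*} [Group G] [Finite G] [CommRing A] [MulSemiringAction G A]
    (hG : IsUnit (Nat.card G : A))
    (N : Type*) [AddCommGroup N] [Module (fixedSubring G A) N] :
    Function.Injective (TensorProduct.mk (fixedSubring G A) A N 1) ∧
      Set.range (TensorProduct.mk (fixedSubring G A) A N 1) =
        {x : A ⊗[fixedSubring G A] N |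
          ∀ g : G, LinearMap.rTensor N (actionLinear g) x = x} := by
  classical
  haveI : Fintype G := Fintype.ofFinite G
  obtain ⟨u, hu⟩ := hG
  have hufix : ∀ g : G, g • ((u⁻¹ : Aˣ) : A) = ((u⁻¹ : Aˣ) : A) := by
    intro g
    have h2 : g • (u : A) = (u : A) := by
      rw [hu]; exact map_natCast (MulSemiringAction.toRingHom G A g) _
    have h1 : (u : A) * g • ((u⁻¹ : Aˣ) : A) = 1 := by
      rw [← h2, ← smul_mul', Units.mul_inv, smul_one]
    calc g • ((u⁻¹ : Aˣ) : A)
        = ((u⁻¹ : Aˣ) : A) * ((u : A) * g • ((u⁻¹ : Aˣ) : A)) := by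
          rw [← mul_assoc, Units.inv_mul, one_mul]
      _ = ((u⁻¹ : Aˣ) : A) := by rw [h1, mul_one]
  set e : (fixedSubring G A) := ⟨((u⁻¹ : Aˣ) : A), hufix⟩ with he
  have hen : (e : A) * (Nat.card G : A) = 1 := by
    rw [← hu]; exact Units.inv_mul u
  have hsum : ∀ a : A, (∑ g : G, g • a) ∈ fixedSubring G A := by
    intro a g
    show g • (∑ h : G, h • a) = ∑ h : G, h • a
    rw [Finset.smul_sum]
    exact Fintype.sum_equiv (Equiv.mulLeft g) _ _ (fun h => by simp [smul_smul])
  have hBsmul : ∀ (b : fixedSubring G A) (a : A), b • a = (b : A) * a := fun b a => rfl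
  let π : A →ₗ[fixedSubring G A] fixedSubring G A :=
    { toFun := fun a => e * ⟨∑ g : G, g • a, hsum a⟩
      map_add' := fun a b => by
        apply Subtype.ext
        push_cast
        rw [← mul_add, ← Finset.sum_add_distrib]
        simp [smul_add]
      map_smul' := fun b a => by
        apply Subtype.ext
        show (e : A) * (∑ g : G, g • ((b : A) * a)) = (b : A) * ((e : A) * ∑ g : G, g • a)
        have : ∀ g : G, g • ((b : A) * a) = (b : A) * (g • a) := fun g => by
          rw [smul_mul', b.2 g]
        simp_rw [this]
        rw [← Finset.mul_sum]
        ring }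
  have hπ1 : π 1 = 1 := by
    apply Subtype.ext
    show (e : A) * (∑ _g : G, (_g • (1 : A))) = 1
    simp only [smul_one, Finset.sum_const, Finset.card_univ, nsmul_eq_mul, mul_one]
    rw [← Nat.card_eq_fintype_card]
    exact hen
  let ψ : A ⊗[fixedSubring G A] N →ₗ[fixedSubring G A] N :=
    (TensorProduct.lid (fixedSubring G A) N).toLinearMap.comp (LinearMap.rTensor N π)
  have hψ : ∀ m : N, ψ (TensorProduct.mk (fixedSubring G A) A N 1 m) = m := by
    intro m
    show (TensorProduct.lid (fixedSubring G A) N)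
        (LinearMap.rTensor N π ((1 : A) ⊗ₜ[fixedSubring G A] m)) = m
    rw [LinearMap.rTensor_tmul, hπ1, TensorProduct.lid_tmul, one_smul]
  constructor
  · exact Function.LeftInverse.injective hψ
  · ext x
    simp only [Set.mem_range, Set.mem_setOf_eq]
    constructor
    · rintro ⟨m, rfl⟩ g
      show LinearMap.rTensor N (actionLinear g) ((1 : A) ⊗ₜ[fixedSubring G A] m) = (1 : A) ⊗ₜ[fixedSubring G A] m
      rw [LinearMap.rTensor_tmul]
      show (g • (1 : A)) ⊗ₜ[fixedSubring G A] m = (1 : A) ⊗ₜ[fixedSubring G A] m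
      rw [smul_one]
    · intro hx
      have hR : ∀ y : A ⊗[fixedSubring G A] N,
          e • ∑ g : G, LinearMap.rTensor N (actionLinear g) y ∈
            LinearMap.range (TensorProduct.mk (fixedSubring G A) A N 1) := by
        intro y
        induction y using TensorProduct.induction_on with
        | zero => simp
        | tmul a m =>
          have h1 : ∑ g : G, LinearMap.rTensor N (actionLinear g) (a ⊗ₜ[fixedSubring G A] m)
              = (⟨∑ g : G, g • a, hsum a⟩ : fixedSubring G A) • ((1 : A) ⊗ₜ[fixedSubring G A] m) := by
            rw [TensorProduct.smul_tmul']
            have : ((⟨∑ g : G, g • a, hsum a⟩ : fixedSubring G A) • (1 : A)) = ∑ g : G, g • a := by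
              rw [hBsmul]; exact mul_one _
            rw [this]
            simp only [LinearMap.rTensor_tmul]
            rw [TensorProduct.sum_tmul]
            rfl
          rw [h1, smul_smul]
          exact Submodule.smul_mem _ _ ⟨m, rfl⟩
        | add v w hv hw =>
          have : ∑ g : G, LinearMap.rTensor N (actionLinear g) (v + w)
              = (∑ g : G, LinearMap.rTensor N (actionLinear g) v)
                + ∑ g : G, LinearMap.rTensor N (actionLinear g) w := by
            simp [Finset.sum_add_distrib]
          rw [this, smul_add]
          exact Submodule.add_mem _ hv hw
      have hx' : e • ∑ g : G, LinearMap.rTensor N (actionLinear g) x = x := by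
        simp_rw [fun g => hx g]
        rw [Finset.sum_const, Finset.card_univ, ← Nat.cast_smul_eq_nsmul (fixedSubring G A), smul_smul]
        have : e * ((Fintype.card G : ℕ) : fixedSubring G A) = 1 := by
          apply Subtype.ext
          push_cast
          rw [← Nat.card_eq_fintype_card]
          exact hen
        rw [this, one_smul]
      rw [← hx']
      exact hR x
end

section
/- Let A be a Noetherian commutative ring, I ⊆ A an ideal, and M a finitely generated A-module. Then for every n, the kernel of M → M̂ (the I-adic completion) maps to zero in M/IⁿM; equivalently, the kernel of M → M̂ equals the intersection ∩_n IⁿM, and this intersection consists of the elements m ∈ M annihilated by some element of 1 + I (Krull intersection theorem). -/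
section aux

universe u v

variable {A : Type u} [CommRing A] (I : Ideal A)
variable {M : Type v} [AddCommGroup M] [Module A M]

private lemma krull_smul_transfer (J : Ideal A) (x : ULift.{u} M) :
    x ∈ (J.comap (ULift.ringEquiv.{u, v} : ULift A ≃+* A)) •
      (⊤ : Submodule (ULift.{v} A) (ULift.{u} M)) ↔
      x.down ∈ J • (⊤ : Submodule A M) := by
  constructor
  · intro hx
    refine Submodule.smul_induction_on hx ?_ ?_
    · intro a ha m _
      exact Submodule.smul_mem_smul (Ideal.mem_comap.mp ha) trivial
    · intro y z hy hz
      exact Submodule.add_mem _ hy hz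
  · intro hx
    have key : ∀ y ∈ J • (⊤ : Submodule A M),
        (ULift.up y : ULift.{u} M) ∈ (J.comap (ULift.ringEquiv.{u, v} : ULift A ≃+* A)) •
          (⊤ : Submodule (ULift.{v} A) (ULift.{u} M)) := by
      intro y hy
      refine Submodule.smul_induction_on hy ?_ ?_
      · intro a ha m _
        have : (ULift.up (a • m) : ULift.{u} M) =
            (ULift.up a : ULift.{v} A) • (ULift.up m : ULift.{u} M) := rfl
        rw [this]
        exact Submodule.smul_mem_smul (Ideal.mem_comap.mpr ha) trivial
      · intro y z hy hz
        have : (ULift.up (y + z) : ULift.{u} M) = ULift.up y + ULift.up z := rfl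
        rw [this]
        exact Submodule.add_mem _ hy hz
    have := key x.down hx
    simpa using this

private lemma krull_mem_iInf_iff [IsNoetherianRing A] [Module.Finite A M] (m : M) :
    m ∈ (⨅ n : ℕ, I ^ n • (⊤ : Submodule A M)) ↔ ∃ r ∈ I, r • m = m := by
  let e : ULift.{v} A ≃+* A := ULift.ringEquiv
  haveI : IsNoetherianRing (ULift.{v} A) := isNoetherianRing_of_ringEquiv A e.symm
  haveI : Module.Finite (ULift.{v} A) (ULift.{u} M) := by
    obtain ⟨s, hs⟩ := Module.Finite.fg_top (R := A) (M := M)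
    classical
    refine ⟨⟨s.image fun y => (ULift.up y : ULift.{u} M), ?_⟩⟩
    rw [eq_top_iff]
    rintro ⟨x⟩ -
    have hx : x ∈ (⊤ : Submodule A M) := trivial
    rw [← hs] at hx
    refine Submodule.span_induction ?_ ?_ ?_ ?_ hx
    · intro y hy
      exact Submodule.subset_span (Finset.mem_coe.mpr (Finset.mem_image.mpr ⟨y, hy, rfl⟩))
    · exact Submodule.zero_mem _
    · intro y z _ _ hy hz
      exact Submodule.add_mem _ hy hz
    · intro a y _ hy
      have : (ULift.up (a • y) : ULift.{u} M) = (ULift.up a : ULift.{v} A) • ULift.up y := rfl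
      rw [this]
      exact Submodule.smul_mem _ _ hy
  let I' : Ideal (ULift.{v} A) := I.comap e
  have hpow : ∀ n : ℕ, (I ^ n).comap e = I' ^ n := by
    intro n
    show (I ^ n).comap e = (I.comap e) ^ n
    rw [← Ideal.map_symm, ← Ideal.map_symm, Ideal.map_pow]
  have trans : m ∈ (⨅ n : ℕ, I ^ n • (⊤ : Submodule A M)) ↔
      (ULift.up m : ULift.{u} M) ∈ (⨅ n : ℕ, I' ^ n • (⊤ : Submodule (ULift.{v} A) (ULift.{u} M))) := by
    simp only [Submodule.mem_iInf]
    refine forall_congr' fun n => ?_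
    rw [← hpow n, krull_smul_transfer]
  rw [trans, Ideal.mem_iInf_smul_pow_eq_bot_iff]
  constructor
  · rintro ⟨r, hr⟩
    refine ⟨(r : ULift.{v} A).down, r.2, ?_⟩
    have := congrArg ULift.down hr
    exact this
  · rintro ⟨r, hr, hrm⟩
    refine ⟨⟨ULift.up r, hr⟩, ?_⟩
    exact congrArg ULift.up hrm

end aux

/-- **Krull intersection theorem.** Over a Noetherian ring `A` with ideal `I`, for a
finitely generated module `M`, the kernel of `M → M̂` is `⋂ₙ IⁿM`, and this intersection
consists exactly of the elements annihilated by some element of `1 + I`. -/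
theorem ker_adicCompletion_of_eq_iInf_and_krull_intersection
    {A : Type*} [CommRing A] [IsNoetherianRing A] (I : Ideal A)
    (M : Type*) [AddCommGroup M] [Module A M] [Module.Finite A M] :
    LinearMap.ker (AdicCompletion.of I M) = (⨅ n : ℕ, I ^ n • (⊤ : Submodule A M)) ∧
      ∀ m : M, (m ∈ ⨅ n : ℕ, I ^ n • (⊤ : Submodule A M)) ↔
        ∃ x ∈ I, (1 + x) • m = 0 := by
  constructor
  · ext m
    simp only [LinearMap.mem_ker, Submodule.mem_iInf]
    constructor
    · intro h n
      have := congrArg (fun f => f.1 n) h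
      simpa [AdicCompletion.of_apply, Submodule.Quotient.mk_eq_zero] using this
    · intro h
      ext n
      simpa [AdicCompletion.of_apply, Submodule.Quotient.mk_eq_zero] using h n
  · intro m
    rw [krull_mem_iInf_iff]
    constructor
    · rintro ⟨r, hr, hrm⟩
      exact ⟨-r, I.neg_mem hr, by rw [add_smul, one_smul, neg_smul, hrm, add_neg_cancel]⟩
    · rintro ⟨x, hx, hxm⟩
      refine ⟨-x, I.neg_mem hx, ?_⟩
      have : (1 : A) • m + x • m = 0 := by rw [← add_smul]; exact hxm
      simp only [one_smul] at this
      simpa [neg_smul] using (eq_neg_of_add_eq_zero_left this).symm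
end

section
/- Let R → S be a ring homomorphism of commutative rings. If S is integral over the image of R, then the induced morphism Spec S → Spec R is a closed map, and conversely if R → S is of finite type and Spec S → Spec R is universally closed then S is integral over R. -/
/-! Integral maps are closed on spectra by going-up. Conversely, base changing along
`R → R[X]` turns `R[X] ⊗[R] S` into `S[X]`, and a ring map whose polynomial extension
`R[X] → S[X]` is closed on spectra is integral. -/

open TensorProduct Polynomial PrimeSpectrum

universe u

lemma PrimeSpectrum.isClosedMap_comap_algebraMap_of_algEquiv {A B C : Type*} [CommRing A]
    [CommRing B] [CommRing C] [Algebra A B] [Algebra A C] (e : B ≃ₐ[A] C)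
    (h : IsClosedMap (comap (algebraMap A B))) : IsClosedMap (comap (algebraMap A C)) := by
  rw [← e.toAlgHom.comp_algebraMap, comap_comp]
  exact h.comp (isHomeomorph_comap_of_bijective e.bijective).isClosedMap

section

attribute [local instance] Polynomial.algebra

lemma PrimeSpectrum.isClosedMap_comap_mapRingHom_of_baseChange {R S : Type*} [CommRing R]
    [CommRing S] [Algebra R S]
    (h : IsClosedMap (comap (algebraMap R[X] (R[X] ⊗[R] S)))) :
    IsClosedMap (comap (mapRingHom (algebraMap R S))) :=
  haveI : Algebra.IsPushout R R[X] S S[X] := Algebra.IsPushout.symm inferInstance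
  isClosedMap_comap_algebraMap_of_algEquiv (Algebra.IsPushout.equiv R R[X] S S[X]) h

end

/-- An integral ring map induces a closed map on prime spectra; conversely, a finite type
ring map whose induced map on spectra is universally closed is integral. -/
theorem integral_iff_specComap_universally_closed
    {R S : Type u} [CommRing R] [CommRing S] [Algebra R S] :
    (Algebra.IsIntegral R S → IsClosedMap (PrimeSpectrum.comap (algebraMap R S))) ∧
      ((Algebra.FiniteType R S ∧
          ∀ (R' : Type u) [CommRing R'] [Algebra R R'],
            IsClosedMap (PrimeSpectrum.comap (algebraMap R' (R' ⊗[R] S)))) →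
        Algebra.IsIntegral R S) := by
  refine ⟨fun h ↦ isClosedMap_comap_of_isIntegral _ h.isIntegral, ?_⟩
  rintro ⟨-, h⟩
  exact ⟨isIntegral_of_isClosedMap_comap_mapRingHom _
    (isClosedMap_comap_mapRingHom_of_baseChange (h R[X]))⟩
end

section
/- Let A be a Noetherian commutative ring complete with respect to an ideal I, and let (M_n) be a compatible system where each M_n is a finitely generated A/I^{n+1}-module and the transition maps induce isomorphisms M_{n+1}/I^{n+1}M_{n+1} ≅ M_n. Then M = lim_n M_n is a finitely generated A-module with M/I^{n+1}M ≅ M_n for all n. -/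
/-- The limit of a compatible system `(Mₙ)` along the transition maps `fₙ : Mₙ₊₁ → Mₙ`,
as a submodule of the product. -/
def limitSubmodule {A : Type*} [CommRing A] (M : ℕ → Type*) [∀ n, AddCommGroup (M n)]
    [∀ n, Module A (M n)] (f : ∀ n, M (n + 1) →ₗ[A] M n) : Submodule A (∀ n, M n) where
  carrier := {v | ∀ n, f n (v (n + 1)) = v n}
  zero_mem' := fun n => by simp
  add_mem' := fun {a b} ha hb n => by simp [ha n, hb n]
  smul_mem' := fun c v hv n => by simp [hv n]

section Helpers

variable {A : Type*} [CommRing A] (I : Ideal A)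
variable {M : ℕ → Type*} [∀ n, AddCommGroup (M n)] [∀ n, Module A (M n)]
variable (f : ∀ n, M (n + 1) →ₗ[A] M n)

theorem mem_limitSubmodule_iff {v : ∀ n, M n} :
    v ∈ limitSubmodule M f ↔ ∀ n, f n (v (n + 1)) = v n := Iff.rfl

/-- Any element of `M 0` lifts to the limit. -/
theorem limit_exists_lift (hsurj : ∀ n, Function.Surjective (f n)) (x0 : M 0) :
    ∃ v ∈ limitSubmodule M f, v 0 = x0 := by
  refine ⟨fun k => Nat.rec x0 (fun k uk => Function.surjInv (hsurj k) uk) k, fun n => ?_, rfl⟩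
  exact Function.surjInv_eq (hsurj n) _

theorem limit_down_zero {v : ∀ n, M n} (hv : v ∈ limitSubmodule M f) :
    ∀ d j, v (j + d) = 0 → v j = 0 := by
  intro d
  induction d with
  | zero => intro j h; exact h
  | succ d ih =>
    intro j h
    have h' : v (j + 1 + d) = 0 := by
      rw [show j + 1 + d = j + (d + 1) by omega]; exact h
    have h2 := ih (j + 1) h'
    rw [← hv j, h2, map_zero]

theorem limit_ker_desc (hsurj : ∀ n, Function.Surjective (f n))
    (hker : ∀ n, LinearMap.ker (f n) = I ^ (n + 1) • (⊤ : Submodule A (M (n + 1))))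
    {v : ∀ n, M n} (hv : v ∈ limitSubmodule M f) (n : ℕ) (h0 : v n = 0) :
    ∀ m, v m ∈ (I ^ (n + 1) • ⊤ : Submodule A (M m)) := by
  have hup : ∀ m, n ≤ m → v m ∈ (I ^ (n + 1) • ⊤ : Submodule A (M m)) := by
    intro m hm
    induction m, hm using Nat.le_induction with
    | base => rw [h0]; exact zero_mem _
    | succ m hm ih =>
      have hmap : Submodule.map (f m) (I ^ (n + 1) • ⊤ : Submodule A (M (m + 1)))
          = (I ^ (n + 1) • ⊤ : Submodule A (M m)) := by
        rw [Submodule.map_smul'', Submodule.map_top, LinearMap.range_eq_top.mpr (hsurj m)]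
      rw [← hmap] at ih
      obtain ⟨w, hw, hwe⟩ := ih
      have hk : v (m + 1) - w ∈ LinearMap.ker (f m) := by
        rw [LinearMap.mem_ker, map_sub, hwe, hv m, sub_self]
      rw [hker m] at hk
      have := add_mem (Submodule.smul_mono_left (Ideal.pow_le_pow_right (by omega)) hk) hw
      simpa using this
  intro m
  rcases le_total m n with hm | hm
  · obtain ⟨d, rfl⟩ := le_iff_exists_add.mp hm
    rw [limit_down_zero f hv d m h0]
    exact zero_mem _
  · exact hup m hm

theorem limit_span_levels
    (hann : ∀ n, ∀ x ∈ I ^ (n + 1), ∀ m : M n, x • m = 0)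
    (hsurj : ∀ n, Function.Surjective (f n))
    (hker : ∀ n, LinearMap.ker (f n) = I ^ (n + 1) • (⊤ : Submodule A (M (n + 1))))
    {r : ℕ} (x : Fin r → limitSubmodule M f)
    (h0 : Submodule.span A (Set.range fun i => (x i : ∀ n, M n) 0) = ⊤) :
    ∀ m, Submodule.span A (Set.range fun i => (x i : ∀ n, M n) m) = ⊤ := by
  intro m
  induction m with
  | zero => exact h0
  | succ m ih =>
    set N := Submodule.span A (Set.range fun i => (x i : ∀ n, M n) (m + 1)) with hN
    have hmapN : N.map (f m) = ⊤ := by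
      rw [hN, Submodule.map_span, ← Set.range_comp]
      have he : ((f m) ∘ fun i => (x i : ∀ n, M n) (m + 1))
          = fun i => (x i : ∀ n, M n) m := by
        funext i; exact (x i).2 m
      rw [he, ih]
    have hsup : N ⊔ (I ^ (m + 1) • ⊤ : Submodule A (M (m + 1))) = ⊤ := by
      rw [eq_top_iff]
      intro y _
      have hy : f m y ∈ N.map (f m) := by rw [hmapN]; trivial
      obtain ⟨w, hw, hwe⟩ := hy
      have hk : y - w ∈ LinearMap.ker (f m) := by
        rw [LinearMap.mem_ker, map_sub, hwe, sub_self]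
      rw [hker m] at hk
      exact Submodule.mem_sup.mpr ⟨w, hw, y - w, hk, by abel⟩
    have hbot : (I ^ (m + 2) • ⊤ : Submodule A (M (m + 1))) = ⊥ := by
      rw [eq_bot_iff]
      refine Submodule.smul_le.mpr fun a ha z _ => ?_
      simpa using hann (m + 1) a ha z
    have hsq : I ^ (m + 1) • (I ^ (m + 1) • ⊤ : Submodule A (M (m + 1)))
        ≤ (I ^ (m + 2) • ⊤ : Submodule A (M (m + 1))) := by
      refine Submodule.smul_le.mpr fun a ha z hz => ?_
      refine Submodule.smul_induction_on hz (fun b hb t _ => ?_) (fun z1 z2 h1 h2 => ?_)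
      · rw [smul_smul]
        have hab : a * b ∈ I ^ (m + 1) * I ^ (m + 1) := Ideal.mul_mem_mul ha hb
        rw [← pow_add] at hab
        exact Submodule.smul_mem_smul (Ideal.pow_le_pow_right (by omega) hab) trivial
      · rw [smul_add]; exact add_mem h1 h2
    have hle : (I ^ (m + 1) • ⊤ : Submodule A (M (m + 1))) ≤ N := by
      calc (I ^ (m + 1) • ⊤ : Submodule A (M (m + 1)))
          = I ^ (m + 1) • (N ⊔ I ^ (m + 1) • ⊤) := by rw [hsup]
        _ = I ^ (m + 1) • N ⊔ I ^ (m + 1) • (I ^ (m + 1) • ⊤) := Submodule.smul_sup _ _ _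
        _ ≤ N ⊔ ⊥ := sup_le_sup Submodule.smul_le_right (hsq.trans hbot.le)
        _ = N := sup_bot_eq N
    rw [eq_top_iff, ← hsup]
    exact sup_le le_rfl hle

theorem limit_core [IsAdicComplete I A]
    (hann : ∀ n, ∀ x ∈ I ^ (n + 1), ∀ m : M n, x • m = 0)
    (hker : ∀ n, LinearMap.ker (f n) = I ^ (n + 1) • (⊤ : Submodule A (M (n + 1))))
    {r : ℕ} (x : Fin r → limitSubmodule M f)
    (hx : ∀ m, Submodule.span A (Set.range fun i => (x i : ∀ n, M n) m) = ⊤)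
    (k : ℕ) (v : limitSubmodule M f)
    (hv : ∀ m, (v : ∀ n, M n) m ∈ (I ^ k • ⊤ : Submodule A (M m))) :
    v ∈ (I ^ k • Submodule.span A (Set.range x) : Submodule A (limitSubmodule M f)) := by
  classical
  set P : ℕ → (Fin r → A) → Prop := fun m b =>
    (∀ i, b i ∈ I ^ k) ∧ (v : ∀ n, M n) m = ∑ i, b i • (x i : ∀ n, M n) m with hP
  have hbase : ∃ b : Fin r → A, P 0 b := by
    have h := hv 0
    rw [← hx 0, Submodule.mem_ideal_smul_span_iff_exists_sum] at h
    obtain ⟨a, ha, hsum⟩ := h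
    refine ⟨fun i => a i, ha, ?_⟩
    rw [← hsum, Finsupp.sum_fintype]
    intro i; exact zero_smul A _
  have hstep : ∀ m (b : Fin r → A), P m b → ∃ c : Fin r → A,
      (∀ i, c i ∈ I ^ (m + 1)) ∧ (∀ i, c i ∈ I ^ k) ∧ P (m + 1) (fun i => b i + c i) := by
    rintro m b ⟨hbI, hbe⟩
    set e : M (m + 1) := (v : ∀ n, M n) (m + 1) - ∑ i, b i • (x i : ∀ n, M n) (m + 1) with he
    have hek : e ∈ (I ^ k • ⊤ : Submodule A (M (m + 1))) :=
      sub_mem (hv (m + 1))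
        (Submodule.sum_mem _ fun i _ => Submodule.smul_mem_smul (hbI i) trivial)
    have hem : e ∈ (I ^ (m + 1) • ⊤ : Submodule A (M (m + 1))) := by
      rw [← hker m, LinearMap.mem_ker, he, map_sub, map_sum]
      have h1 : f m ((v : ∀ n, M n) (m + 1)) = (v : ∀ n, M n) m := v.2 m
      have h2 : ∀ i, f m (b i • (x i : ∀ n, M n) (m + 1)) = b i • (x i : ∀ n, M n) m := by
        intro i; rw [map_smul, (x i).2 m]
      simp only [h1, h2]
      rw [← hbe, sub_self]
    have hmax : e ∈ (I ^ max (m + 1) k • ⊤ : Submodule A (M (m + 1))) := by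
      rcases le_total k (m + 1) with h | h
      · rwa [Nat.max_eq_left h]
      · rwa [Nat.max_eq_right h]
    rw [← hx (m + 1), Submodule.mem_ideal_smul_span_iff_exists_sum] at hmax
    obtain ⟨a, ha, hsum⟩ := hmax
    refine ⟨fun i => a i,
      fun i => Ideal.pow_le_pow_right (le_max_left _ _) (ha i),
      fun i => Ideal.pow_le_pow_right (le_max_right _ _) (ha i),
      fun i => add_mem (hbI i) (Ideal.pow_le_pow_right (le_max_right _ _) (ha i)), ?_⟩
    have hsum' : ∑ i, a i • (x i : ∀ n, M n) (m + 1) = e := by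
      rw [← hsum, Finsupp.sum_fintype]
      intro i; exact zero_smul A _
    simp only [add_smul, Finset.sum_add_distrib, hsum', he]
    abel
  choose step hc1 hc2 hc3 using hstep
  let D : ∀ m, {b : Fin r → A // P m b} := fun m =>
    Nat.rec ⟨Classical.choose hbase, Classical.choose_spec hbase⟩
      (fun m d => ⟨fun i => d.1 i + step m d.1 d.2 i, hc3 m d.1 d.2⟩) m
  have hD : ∀ m i, (D (m + 1)).1 i - (D m).1 i ∈ I ^ (m + 1) := by
    intro m i
    show (D m).1 i + step m (D m).1 (D m).2 i - (D m).1 i ∈ I ^ (m + 1)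
    rw [add_sub_cancel_left]
    exact hc1 m (D m).1 (D m).2 i
  have hsm : ∀ (j : ℕ) (a : A), a ∈ (I ^ j • ⊤ : Submodule A A) ↔ a ∈ I ^ j := by
    intro j a
    rw [smul_eq_mul, Ideal.mul_top]
  have hC : ∀ i, ∃ L : A, ∀ m, (D m).1 i ≡ L [SMOD (I ^ m • ⊤ : Submodule A A)] := by
    intro i
    apply IsPrecomplete.prec (IsAdicComplete.toIsPrecomplete)
    intro m n hmn
    rw [SModEq.sub_mem, hsm]
    clear hx hv
    induction n, hmn using Nat.le_induction with
    | base => rw [sub_self]; exact zero_mem _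
    | succ n hn ih =>
      have h1 : (D n).1 i - (D (n + 1)).1 i ∈ I ^ m :=
        neg_mem_iff.mp (by rw [neg_sub]; exact Ideal.pow_le_pow_right (by omega) (hD n i))
      have := add_mem ih h1
      rwa [sub_add_sub_cancel] at this
  choose Lf hLf using hC
  have hsub : ∀ i m, (D m).1 i - Lf i ∈ I ^ m := by
    intro i m
    have := hLf i m
    rw [SModEq.sub_mem, hsm] at this
    exact this
  have hLk : ∀ i, Lf i ∈ I ^ k := by
    intro i
    have h1 := hsub i k
    have h2 := (D k).2.1 i
    have := sub_mem h2 h1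
    simpa using this
  have hveq : (v : ∀ n, M n) = ∑ i, Lf i • (x i : ∀ n, M n) := by
    funext m
    have h1 : (v : ∀ n, M n) m = ∑ i, (D (m + 1)).1 i • (x i : ∀ n, M n) m := by
      have he := (D (m + 1)).2.2
      have := congrArg (f m) he
      rw [map_sum] at this
      have h2 : ∀ i, f m ((D (m + 1)).1 i • (x i : ∀ n, M n) (m + 1))
          = (D (m + 1)).1 i • (x i : ∀ n, M n) m := by
        intro i; rw [map_smul, (x i).2 m]
      rw [v.2 m] at this
      simpa only [h2] using this
    have h2 : ∀ i, Lf i • (x i : ∀ n, M n) m = (D (m + 1)).1 i • (x i : ∀ n, M n) m := by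
      intro i
      have h3 := hann m _ (hsub i (m + 1)) ((x i : ∀ n, M n) m)
      rw [sub_smul] at h3
      have := sub_eq_zero.mp h3
      rw [this]
    calc (v : ∀ n, M n) m = ∑ i, (D (m + 1)).1 i • (x i : ∀ n, M n) m := h1
      _ = ∑ i, Lf i • (x i : ∀ n, M n) m := by
          refine Finset.sum_congr rfl fun i _ => (h2 i).symm
      _ = (∑ i, Lf i • (x i : ∀ n, M n)) m := by
          rw [Finset.sum_apply]
          rfl
  have hvsum : v = ∑ i, Lf i • x i := by
    apply Subtype.ext
    rw [hveq]
    push_cast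
    rfl
  rw [hvsum]
  exact Submodule.sum_mem _ fun i _ =>
    Submodule.smul_mem_smul (hLk i) (Submodule.subset_span (Set.mem_range_self i))

end Helpers

/-- **Algebraization of compatible systems.** Let `A` be Noetherian and `I`-adically
complete, and let `(Mₙ)` be a compatible system: each `Mₙ` is a finitely generated module
killed by `I^(n+1)` (hence an `A/I^(n+1)`-module), and the transition maps `fₙ` are
surjective with kernel `I^(n+1)•Mₙ₊₁` (i.e. they induce isomorphisms
`Mₙ₊₁/I^(n+1)Mₙ₊₁ ≅ Mₙ`). Then `M = lim Mₙ` is a finitely generated `A`-module, and for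
each `n` the projection `M → Mₙ` is surjective with kernel `I^(n+1)•M`, i.e.
`M/I^(n+1)M ≅ Mₙ`. -/
theorem limit_of_compatible_system_finite_and_quotients
    {A : Type*} [CommRing A] [IsNoetherianRing A] (I : Ideal A) [IsAdicComplete I A]
    (M : ℕ → Type*) [∀ n, AddCommGroup (M n)] [∀ n, Module A (M n)]
    [∀ n, Module.Finite A (M n)]
    (hann : ∀ n, ∀ x ∈ I ^ (n + 1), ∀ m : M n, x • m = 0)
    (f : ∀ n, M (n + 1) →ₗ[A] M n)
    (hsurj : ∀ n, Function.Surjective (f n))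
    (hker : ∀ n, LinearMap.ker (f n) = I ^ (n + 1) • (⊤ : Submodule A (M (n + 1)))) :
    Module.Finite A (limitSubmodule M f) ∧
      ∀ n, Function.Surjective ((LinearMap.proj n).comp (limitSubmodule M f).subtype) ∧
        LinearMap.ker ((LinearMap.proj n).comp (limitSubmodule M f).subtype) =
          I ^ (n + 1) • (⊤ : Submodule A (limitSubmodule M f)) := by
  classical
  obtain ⟨r, s, hs⟩ := Module.Finite.exists_fin (R := A) (M := M 0)
  have hlift : ∀ i, ∃ w ∈ limitSubmodule M f, w 0 = s i :=
    fun i => limit_exists_lift f hsurj (s i)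
  choose xv hxmem hx0 using hlift
  set x : Fin r → limitSubmodule M f := fun i => ⟨xv i, hxmem i⟩ with hxdef
  have h0 : Submodule.span A (Set.range fun i => (x i : ∀ n, M n) 0) = ⊤ := by
    have : (fun i => (x i : ∀ n, M n) 0) = s := funext hx0
    rw [this, hs]
  have hx : ∀ m, Submodule.span A (Set.range fun i => (x i : ∀ n, M n) m) = ⊤ :=
    limit_span_levels I f hann hsurj hker x h0
  have hvtop : ∀ v : limitSubmodule M f, ∀ m,
      (v : ∀ n, M n) m ∈ (I ^ 0 • ⊤ : Submodule A (M m)) := by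
    intro v m
    rw [pow_zero, Ideal.one_eq_top, Submodule.top_smul]
    trivial
  have hspan : Submodule.span A (Set.range x) = ⊤ := by
    rw [eq_top_iff]
    intro v _
    have := limit_core I f hann hker x hx 0 v (hvtop v)
    rwa [pow_zero, Ideal.one_eq_top, Submodule.top_smul] at this
  refine ⟨⟨Submodule.fg_def.mpr ⟨Set.range x, Set.finite_range x, hspan⟩⟩, fun n => ⟨?_, ?_⟩⟩
  · -- surjectivity
    intro y
    have hy : y ∈ Submodule.span A (Set.range fun i => (x i : ∀ n, M n) n) := by
      rw [hx n]; trivial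
    have hre : (Set.range fun i => (x i : ∀ n, M n) n)
        = ⇑((LinearMap.proj n).comp (limitSubmodule M f).subtype) '' Set.range x := by
      rw [← Set.range_comp]; rfl
    rw [hre, ← Submodule.map_span] at hy
    obtain ⟨w, _, hw⟩ := hy
    exact ⟨w, hw⟩
  · -- kernel
    apply le_antisymm
    · intro v hv
      rw [LinearMap.mem_ker] at hv
      have hv' : (v : ∀ n, M n) n = 0 := hv
      have hdesc := limit_ker_desc I f hsurj hker v.2 n hv'
      have := limit_core I f hann hker x hx (n + 1) v hdesc
      exact Submodule.smul_mono le_rfl le_top this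
    · refine Submodule.smul_le.mpr fun a ha w _ => ?_
      rw [LinearMap.mem_ker, map_smul]
      have : ((LinearMap.proj n).comp (limitSubmodule M f).subtype) w = (w : ∀ n, M n) n := rfl
      rw [this]
      exact hann n a ha _
end
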